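/- Let p be an odd prime, n ≥ 1, and R a commutative ring in which p·1 = 0. Let F ∈ R⟦X,Y⟧ be a formal group law (F(X,0) = X, F(0,Y) = Y, F(X,Y) = F(Y,X), F(F(X,Y),Z) = F(X,F(Y,Z)), zero constant term) such that F(X,Y) ≡ X + Y modulo the ideal (X,Y)^{p^n} of R⟦X,Y⟧. If f ∈ R⟦X⟧ satisfies f ≡ X (mod X²) and f(F(X,Y)) = F(f(X), f(Y)), then there exist a_1, …, a_{n−1} ∈ R with f ≡ X + Σ_{k=1}^{n−1} a_k X^{p^k} (mod X^{p^n}); thus the truncation of f lies in the group G(R) of classes in R[X]/(X^{p^n}) of polynomials X + Σ_{k=1}^{n−1} a_k X^{p^k}. Moreover, for two such power series f and g, the truncation of g(f(X)) modulo X^{p^n} equals the composite in R[X]/(X^{p^n}) of the truncation of g with the truncation of f; hence truncation modulo X^{p^n} is a group homomorphism α from the group of strict automorphisms of F (under f·g = g∘f) to G(R). -/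

import Mathlib

open Polynomial

/-- Substitution of a multivariate power series `a` (with zero constant term) for the
variable of a one-variable power series `f`; this is the usual substitution whenever `a`
has zero constant term. -/
noncomputable def substPS {R : Type} [CommRing R] {σ : Type} (a : MvPowerSeries σ R)
    (f : PowerSeries R) : MvPowerSeries σ R :=
  fun d => ∑ m ∈ Finset.range (d.sum (fun _ k => k) + 1),
    PowerSeries.coeff m f * MvPowerSeries.coeff d (a ^ m)

/-- Substitution of two power series `g₀, g₁` (with zero constant terms) for the two
variables of `F ∈ R⟦X,Y⟧`. -/
noncomputable def subst2 {R : Type} [CommRing R] {σ : Type} (g₀ g₁ : MvPowerSeries σ R)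
    (F : MvPowerSeries (Fin 2) R) : MvPowerSeries σ R :=
  fun d => ∑ i ∈ Finset.range (d.sum (fun _ k => k) + 1),
    ∑ j ∈ Finset.range (d.sum (fun _ k => k) + 1),
      MvPowerSeries.coeff (Finsupp.single (0 : Fin 2) i + Finsupp.single (1 : Fin 2) j) F *
        MvPowerSeries.coeff d (g₀ ^ i * g₁ ^ j)

/-!
Write `f = ∑ cₘ Xᵐ`. Below degree `pⁿ` the law `F` agrees with `X + Y`, so for `0 < i < m < pⁿ`
the coefficient of `Xⁱ Yᵐ⁻ⁱ` in `f(F(X,Y))` is `(m choose i) cₘ`, while in `F(f(X), f(Y))` it is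
that of `f(X) + f(Y)`, namely `0`. If `m = pᵏ t` with `p ∤ t` and `t ≥ 2`, Lucas' theorem gives
`(m choose pᵏ) ≡ t (mod p)`, a unit in `R`, hence `cₘ = 0`: below degree `pⁿ` only the
coefficients at powers of `p` survive. Truncation is compatible with composition because the
coefficients of `g(f(X))` below degree `N` only involve those of `f` and `g` below degree `N`.
-/

theorem Nat.Prime.not_dvd_choose_pow_mul {p : ℕ} (hp : p.Prime) (k : ℕ) {t : ℕ}
    (ht : ¬ p ∣ t) : ¬ p ∣ (p ^ k * t).choose (p ^ k) := by
  have := Fact.mk hp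
  have h := Choose.choose_pow_mul_pow_mul_modEq_choose_nat (p := p) (k := k) (a := t) (b := 1)
  rw [mul_one, Nat.choose_one_right] at h
  rwa [h.dvd_iff dvd_rfl]

theorem isUnit_natCast_of_not_dvd {R : Type*} [CommRing R] {p c : ℕ} (hp : p.Prime)
    (hpR : (p : R) = 0) (hc : ¬ p ∣ c) : IsUnit (c : R) := by
  have hcop : IsCoprime (c : ℤ) p :=
    Nat.isCoprime_iff_coprime.2 (Nat.Coprime.symm ((hp.coprime_iff_not_dvd).2 hc))
  exact isCoprime_zero_right.1 (by simpa [hpR] using hcop.map (Int.castRingHom R))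

namespace MvPowerSeries

variable {σ R : Type*} [CommRing R]

theorem natCast_le_order_of_mem_span_pow {s : Set (MvPowerSeries σ R)}
    (hs : ∀ x ∈ s, constantCoeff x = 0) {N : ℕ} {x : MvPowerSeries σ R}
    (hx : x ∈ Ideal.span s ^ N) : (N : ℕ∞) ≤ x.order := by
  induction N generalizing x with
  | zero => simp
  | succ N ih =>
    rw [pow_succ] at hx
    refine Submodule.mul_induction_on hx (fun y hy z hz => ?_) (fun y z hy hz => ?_)
    · have hspan : Ideal.span s ≤ RingHom.ker constantCoeff :=
        Ideal.span_le.2 fun x hx => RingHom.mem_ker.2 (hs x hx)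
      have hz1 : 1 ≤ z.order := one_le_order_iff_constCoeff_eq_zero.2 (hspan hz)
      calc ((N + 1 : ℕ) : ℕ∞) = N + 1 := by push_cast; rfl
        _ ≤ y.order + z.order := add_le_add (ih hy) hz1
        _ ≤ (y * z).order := le_order_mul
    · exact le_trans (le_min hy hz) min_order_le_add

theorem coeff_pow_eq_of_lt_order_sub {F G : MvPowerSeries σ R} {d : σ →₀ ℕ}
    (hd : (d.degree : ℕ∞) < (F - G).order) (m : ℕ) : coeff d (F ^ m) = coeff d (G ^ m) := by
  obtain ⟨w, hw⟩ := sub_dvd_pow_sub_pow F G m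
  rw [← sub_eq_zero, ← map_sub, hw]
  exact coeff_of_lt_order (lt_of_lt_of_le hd (le_self_add.trans le_order_mul))

theorem coeff_X_add_X_pow (d : Fin 2 →₀ ℕ) (m : ℕ) :
    coeff d ((X 0 + X 1 : MvPowerSeries (Fin 2) R) ^ m) =
      if d.degree = m then (m.choose (d 0) : R) else 0 := by
  have h := MvPolynomial.coeff_add_pow (R := R) d m
  rw [← MvPolynomial.coeff_coe] at h
  push_cast at h
  rw [h]
  simp only [Finset.HasAntidiagonal.mem_antidiagonal, Finsupp.degree_eq_sum, Fin.sum_univ_two]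

end MvPowerSeries

namespace PowerSeries

variable {R : Type} [CommRing R]

theorem coeff_zero_one_of_X_sq_dvd_sub_X {f : PowerSeries R} (h : X ^ 2 ∣ f - X) :
    constantCoeff f = 0 ∧ coeff 1 f = 1 := by
  have hlow := X_pow_dvd_iff.1 h
  exact ⟨by simpa using hlow 0 (by norm_num), by simpa [sub_eq_zero] using hlow 1 (by norm_num)⟩

theorem X_pow_dvd_sub_sum_coeff_pow {f : PowerSeries R} {p n : ℕ} (hp : 1 < p)
    (hf : ∀ m < p ^ n, (∀ k, m ≠ p ^ k) → coeff m f = 0) :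
    X ^ (p ^ n) ∣ f - ∑ k ∈ Finset.range n, C (coeff (p ^ k) f) * X ^ (p ^ k) := by
  rw [X_pow_dvd_iff]
  intro m hm
  simp only [map_sub, map_sum, coeff_C_mul, coeff_X_pow]
  by_cases hmp : ∃ k, m = p ^ k
  · obtain ⟨k, rfl⟩ := hmp
    have hk : k < n := (Nat.pow_lt_pow_iff_right hp).1 hm
    simp [pow_right_inj₀ (by omega : 0 < p) hp.ne', hk]
  · push Not at hmp
    simp [hf m hm hmp, hmp]

end PowerSeries

theorem Polynomial.X_pow_dvd_trunc_sub {R : Type} [CommRing R] {N : ℕ} {f : PowerSeries R}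
    {q : R[X]} (h : PowerSeries.X ^ N ∣ f - (q : PowerSeries R)) :
    X ^ N ∣ PowerSeries.trunc N f - q := by
  rw [Polynomial.X_pow_dvd_iff]
  intro d hd
  have hcoeff := PowerSeries.X_pow_dvd_iff.1 h d hd
  rw [map_sub, Polynomial.coeff_coe] at hcoeff
  rwa [Polynomial.coeff_sub, PowerSeries.coeff_trunc, if_pos hd]

section Substitution

variable {R σ : Type} [CommRing R]

theorem coeff_substPS (a : MvPowerSeries σ R) (f : PowerSeries R) (d : σ →₀ ℕ) :
    MvPowerSeries.coeff d (substPS a f) =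
      ∑ m ∈ Finset.range (d.degree + 1), PowerSeries.coeff m f * MvPowerSeries.coeff d (a ^ m) :=
  rfl

theorem constantCoeff_substPS (a : MvPowerSeries σ R) (f : PowerSeries R) :
    MvPowerSeries.constantCoeff (substPS a f) = PowerSeries.constantCoeff f := by
  rw [← MvPowerSeries.coeff_zero_eq_constantCoeff_apply, coeff_substPS]
  simp

theorem coeff_substPS_eq_of_lt_order_sub {F G : MvPowerSeries σ R} (f : PowerSeries R)
    {d : σ →₀ ℕ} (hd : (d.degree : ℕ∞) < (F - G).order) :
    MvPowerSeries.coeff d (substPS F f) = MvPowerSeries.coeff d (substPS G f) := by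
  simp only [coeff_substPS, MvPowerSeries.coeff_pow_eq_of_lt_order_sub hd]

theorem coeff_substPS_X_add_X (f : PowerSeries R) (d : Fin 2 →₀ ℕ) :
    MvPowerSeries.coeff d (substPS (MvPowerSeries.X 0 + MvPowerSeries.X 1) f) =
      PowerSeries.coeff d.degree f * (d.degree.choose (d 0) : R) := by
  simp [coeff_substPS, MvPowerSeries.coeff_X_add_X_pow]

theorem coeff_substPS_X_of_ne [DecidableEq σ] {s t : σ} (hst : s ≠ t) (f : PowerSeries R)
    {d : σ →₀ ℕ} (hd : d t ≠ 0) : MvPowerSeries.coeff d (substPS (MvPowerSeries.X s) f) = 0 := by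
  rw [coeff_substPS]
  refine Finset.sum_eq_zero fun m _ => ?_
  rw [MvPowerSeries.X_pow_eq, MvPowerSeries.coeff_monomial, if_neg, mul_zero]
  rintro rfl
  simp [hst] at hd

theorem coeff_subst2 (u v : MvPowerSeries σ R) (F : MvPowerSeries (Fin 2) R) (d : σ →₀ ℕ) :
    MvPowerSeries.coeff d (subst2 u v F) =
      ∑ i ∈ Finset.range (d.degree + 1), ∑ j ∈ Finset.range (d.degree + 1),
        MvPowerSeries.coeff (Finsupp.single (0 : Fin 2) i + Finsupp.single (1 : Fin 2) j) F *
          MvPowerSeries.coeff d (u ^ i * v ^ j) :=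
  rfl

theorem coeff_subst2_eq_of_lt_order_sub {u v : MvPowerSeries σ R}
    (hu : MvPowerSeries.constantCoeff u = 0) (hv : MvPowerSeries.constantCoeff v = 0)
    {F G : MvPowerSeries (Fin 2) R} {d : σ →₀ ℕ} (hd : (d.degree : ℕ∞) < (F - G).order) :
    MvPowerSeries.coeff d (subst2 u v F) = MvPowerSeries.coeff d (subst2 u v G) := by
  rw [coeff_subst2, coeff_subst2]
  refine Finset.sum_congr rfl fun i _ => Finset.sum_congr rfl fun j _ => ?_
  by_cases hij : i + j ≤ d.degree
  · have hpair : ((Finsupp.single (0 : Fin 2) i + Finsupp.single (1 : Fin 2) j).degree : ℕ∞) <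
        (F - G).order := by
      refine lt_of_le_of_lt ?_ hd
      simpa using (Nat.cast_le (α := ℕ∞)).2 hij
    rw [← sub_eq_zero, ← sub_mul, ← map_sub, MvPowerSeries.coeff_of_lt_order hpair, zero_mul]
  · have huv : ((i + j : ℕ) : ℕ∞) ≤ (u ^ i * v ^ j).order := by
      calc ((i + j : ℕ) : ℕ∞) = i + j := by push_cast; rfl
        _ ≤ (u ^ i).order + (v ^ j).order :=
          add_le_add (MvPowerSeries.le_order_pow_of_constantCoeff_eq_zero i hu)
            (MvPowerSeries.le_order_pow_of_constantCoeff_eq_zero j hv)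
        _ ≤ (u ^ i * v ^ j).order := MvPowerSeries.le_order_mul
    rw [MvPowerSeries.coeff_of_lt_order (lt_of_lt_of_le (by exact_mod_cast not_le.1 hij) huv),
      mul_zero, mul_zero]

theorem coeff_subst2_X_add_X (u v : MvPowerSeries σ R) {d : σ →₀ ℕ} (hd : d.degree ≠ 0) :
    MvPowerSeries.coeff d (subst2 u v (MvPowerSeries.X 0 + MvPowerSeries.X 1)) =
      MvPowerSeries.coeff d u + MvPowerSeries.coeff d v := by
  have h1 : 1 ∈ Finset.range (d.degree + 1) := by simp; omega
  simp [coeff_subst2, MvPowerSeries.coeff_X, add_mul, Finset.sum_add_distrib, Finsupp.ext_iff,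
    Fin.forall_fin_two, ite_and, h1]

namespace PowerSeries

theorem coeff_substPS (f g : PowerSeries R) (d : ℕ) :
    coeff d (substPS f g) = ∑ m ∈ Finset.range (d + 1), coeff m g * coeff d (f ^ m) := by
  rw [coeff_def Finsupp.single_eq_same, _root_.coeff_substPS, Finsupp.degree_single]

theorem X_pow_dvd_trunc_substPS_sub_comp {f : PowerSeries R} (hf0 : constantCoeff f = 0)
    (g : PowerSeries R) (N : ℕ) :
    Polynomial.X ^ N ∣ trunc N (substPS f g) - (trunc N g).comp (trunc N f) := by
  rw [Polynomial.X_pow_dvd_iff]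
  intro d hd
  have hpow : ∀ m, ((trunc N f) ^ m).coeff d = coeff d (f ^ m) := fun m =>
    calc ((trunc N f) ^ m).coeff d = (trunc N ((trunc N f : PowerSeries R) ^ m)).coeff d := by
          rw [coeff_trunc, if_pos hd, ← Polynomial.coe_pow, Polynomial.coeff_coe]
      _ = coeff d (f ^ m) := by rw [trunc_trunc_pow, coeff_trunc, if_pos hd]
  rw [Polynomial.coeff_sub, coeff_trunc, if_pos hd, sub_eq_zero, Polynomial.comp,
    eval₂_trunc_eq_sum_range, Polynomial.finsetSum_coeff, coeff_substPS]
  simp only [Polynomial.coeff_C_mul, hpow]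
  refine Finset.sum_subset (Finset.range_subset_range.2 hd) fun m _ hm => ?_
  have hfm : X ^ m ∣ f ^ m := pow_dvd_pow_of_dvd (X_dvd_iff.2 hf0) m
  rw [X_pow_dvd_iff.1 hfm d (by simpa using hm), mul_zero]

end PowerSeries

end Substitution

section Endomorphism

variable {R : Type} [CommRing R]

/-- `f(F(X,Y)) = F(f(X), f(Y))`. -/
def IsEndomorphism (F : MvPowerSeries (Fin 2) R) (f : PowerSeries R) : Prop :=
  substPS F f = subst2 (substPS (MvPowerSeries.X 0) f) (substPS (MvPowerSeries.X 1) f) F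

variable {F : MvPowerSeries (Fin 2) R} {f : PowerSeries R} {N : ℕ}

theorem coeff_mul_choose_eq_zero_of_isEndomorphism
    (hF : (N : ℕ∞) ≤ (F - (MvPowerSeries.X 0 + MvPowerSeries.X 1)).order)
    (hf0 : PowerSeries.constantCoeff f = 0)
    (hf : IsEndomorphism F f)
    {d : Fin 2 →₀ ℕ} (hdN : d.degree < N) (hd0 : d 0 ≠ 0) (hd1 : d 1 ≠ 0) :
    PowerSeries.coeff d.degree f * (d.degree.choose (d 0) : R) = 0 := by
  set u := substPS (MvPowerSeries.X 0 : MvPowerSeries (Fin 2) R) f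
  set v := substPS (MvPowerSeries.X 1 : MvPowerSeries (Fin 2) R) f
  have hlt : (d.degree : ℕ∞) < (F - (MvPowerSeries.X 0 + MvPowerSeries.X 1)).order :=
    lt_of_lt_of_le (by exact_mod_cast hdN) hF
  have hu : MvPowerSeries.constantCoeff u = 0 := by rw [constantCoeff_substPS, hf0]
  have hv : MvPowerSeries.constantCoeff v = 0 := by rw [constantCoeff_substPS, hf0]
  have hdeg : d.degree ≠ 0 := by
    rw [Finsupp.degree_eq_sum, Fin.sum_univ_two]
    omega
  calc _ = MvPowerSeries.coeff d (substPS (MvPowerSeries.X 0 + MvPowerSeries.X 1) f) :=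
        (coeff_substPS_X_add_X f d).symm
    _ = MvPowerSeries.coeff d (substPS F f) := (coeff_substPS_eq_of_lt_order_sub f hlt).symm
    _ = MvPowerSeries.coeff d (subst2 u v F) := congrArg (MvPowerSeries.coeff d) hf
    _ = MvPowerSeries.coeff d (subst2 u v (MvPowerSeries.X 0 + MvPowerSeries.X 1)) :=
        coeff_subst2_eq_of_lt_order_sub hu hv hlt
    _ = MvPowerSeries.coeff d u + MvPowerSeries.coeff d v := coeff_subst2_X_add_X u v hdeg
    _ = 0 := by
      rw [coeff_substPS_X_of_ne zero_ne_one f hd1, coeff_substPS_X_of_ne one_ne_zero f hd0,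
        add_zero]

theorem coeff_eq_zero_of_isEndomorphism_of_ne_pow {p : ℕ} (hp : p.Prime) (hpR : (p : R) = 0)
    (hF : (N : ℕ∞) ≤ (F - (MvPowerSeries.X 0 + MvPowerSeries.X 1)).order)
    (hf0 : PowerSeries.constantCoeff f = 0)
    (hf : IsEndomorphism F f)
    {m : ℕ} (hmN : m < N) (hmp : ∀ k, m ≠ p ^ k) : PowerSeries.coeff m f = 0 := by
  rcases Nat.eq_zero_or_pos m with rfl | hm
  · rwa [PowerSeries.coeff_zero_eq_constantCoeff_apply]
  obtain ⟨k, t, hpt, rfl⟩ := Nat.exists_eq_pow_mul_and_not_dvd hm.ne' p hp.ne_one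
  have ht : 2 ≤ t := by
    rcases t with _ | _ | t
    · simp at hpt
    · exact absurd (mul_one _) (hmp k)
    · omega
  let d : Fin 2 →₀ ℕ := Finsupp.single 0 (p ^ k) + Finsupp.single 1 (p ^ k * (t - 1))
  have hdeg : d.degree = p ^ k * t := by
    simp only [d, map_add, Finsupp.degree_single]
    rw [← mul_one_add]
    congr 1
    omega
  have h := coeff_mul_choose_eq_zero_of_isEndomorphism hF hf0 hf (d := d) (by rwa [hdeg])
    (by simp [d, hp.ne_zero]) (by simp [d, hp.ne_zero]; omega)
  rw [hdeg] at h
  have hunit := isUnit_natCast_of_not_dvd hp hpR (hp.not_dvd_choose_pow_mul k hpt)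
  simpa [d, hunit.mul_left_eq_zero] using h

theorem X_pow_dvd_sub_X_add_sum_of_isEndomorphism {p n : ℕ} (hp : p.Prime) (hn : 1 ≤ n)
    (hpR : (p : R) = 0)
    (hF : ((p ^ n : ℕ) : ℕ∞) ≤ (F - (MvPowerSeries.X 0 + MvPowerSeries.X 1)).order)
    (hfX : PowerSeries.X ^ 2 ∣ f - PowerSeries.X) (hf : IsEndomorphism F f) :
    PowerSeries.X ^ (p ^ n) ∣ f - (PowerSeries.X + ∑ k ∈ Finset.Ico 1 n,
      PowerSeries.C (PowerSeries.coeff (p ^ k) f) * PowerSeries.X ^ (p ^ k)) := by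
  obtain ⟨hf0, hf1⟩ := PowerSeries.coeff_zero_one_of_X_sq_dvd_sub_X hfX
  have h := PowerSeries.X_pow_dvd_sub_sum_coeff_pow hp.one_lt
    fun m hm hmp => coeff_eq_zero_of_isEndomorphism_of_ne_pow hp hpR hF hf0 hf hm hmp
  rwa [Finset.range_eq_Ico, Finset.sum_eq_sum_Ico_succ_bot hn, pow_zero, pow_one, hf1, map_one,
    one_mul] at h

end Endomorphism

theorem stmt_14 (p n : ℕ) (hp : p.Prime) (hn : 1 ≤ n)
    (R : Type) [CommRing R] (hpR : (p : R) = 0)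
    (F : MvPowerSeries (Fin 2) R)
    -- F(X,Y) ≡ X + Y modulo (X,Y)^(p^n)
    (hFadd : F - (MvPowerSeries.X 0 + MvPowerSeries.X 1) ∈
      (Ideal.span {(MvPowerSeries.X 0 : MvPowerSeries (Fin 2) R),
        MvPowerSeries.X 1}) ^ (p ^ n))
    -- the set of strict automorphisms of F
    (A : Set (PowerSeries R))
    (hA : A = {f | f - PowerSeries.X ∈ Ideal.span {(PowerSeries.X : PowerSeries R) ^ 2} ∧
      substPS F f =
        subst2 (substPS (MvPowerSeries.X 0 : MvPowerSeries (Fin 2) R) f)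
          (substPS (MvPowerSeries.X 1 : MvPowerSeries (Fin 2) R) f) F})
    (J : Ideal (Polynomial R))
    (hJ : J = Ideal.span {(X : Polynomial R) ^ (p ^ n)})
    (G : Set (Polynomial R ⧸ J))
    (hG : G = {q | ∃ a : ℕ → R,
      q = Ideal.Quotient.mk J (X + ∑ k ∈ Finset.Ico 1 n, C (a k) * X ^ (p ^ k))}) :
    -- f ≡ X + Σ_{k=1}^{n-1} a_k X^(p^k) (mod X^(p^n))
    (∀ f ∈ A, ∃ a : ℕ → R,
      f - (PowerSeries.X + ∑ k ∈ Finset.Ico 1 n,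
          PowerSeries.C (a k) * PowerSeries.X ^ (p ^ k)) ∈
        Ideal.span {(PowerSeries.X : PowerSeries R) ^ (p ^ n)}) ∧
    -- hence the truncation of f lies in G(R)
    (∀ f ∈ A, Ideal.Quotient.mk J (PowerSeries.trunc (p ^ n) f) ∈ G) ∧
    -- truncation of g(f(X)) = composite of truncations, i.e. truncation is a group
    -- homomorphism (for the products f·g = g∘f on both sides)
    (∀ f ∈ A, ∀ g ∈ A,
      Ideal.Quotient.mk J (PowerSeries.trunc (p ^ n) (substPS f g)) =
        Ideal.Quotient.mk J
          ((PowerSeries.trunc (p ^ n) g).comp (PowerSeries.trunc (p ^ n) f))) := by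
  subst hA hJ hG
  have hF : ((p ^ n : ℕ) : ℕ∞) ≤ (F - (MvPowerSeries.X 0 + MvPowerSeries.X 1)).order :=
    MvPowerSeries.natCast_le_order_of_mem_span_pow (by rintro x (rfl | rfl) <;> simp) hFadd
  have hcongr (f : PowerSeries R)
      (hf : f - PowerSeries.X ∈ Ideal.span {PowerSeries.X ^ 2} ∧ IsEndomorphism F f) :=
    X_pow_dvd_sub_X_add_sum_of_isEndomorphism hp hn hpR hF (Ideal.mem_span_singleton.1 hf.1) hf.2
  refine ⟨fun f hf => ⟨_, Ideal.mem_span_singleton.2 (hcongr f hf)⟩,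
    fun f hf => ⟨fun k => PowerSeries.coeff (p ^ k) f, ?_⟩, fun f hf g _ => ?_⟩
  · rw [Ideal.Quotient.eq, Ideal.mem_span_singleton]
    refine Polynomial.X_pow_dvd_trunc_sub ?_
    rw [← Polynomial.coeToPowerSeries.ringHom_apply, map_add, map_sum]
    simpa [Polynomial.coeToPowerSeries.ringHom_apply] using hcongr f hf
  · rw [Ideal.Quotient.eq, Ideal.mem_span_singleton]
    exact PowerSeries.X_pow_dvd_trunc_substPS_sub_comp
      (PowerSeries.coeff_zero_one_of_X_sq_dvd_sub_X (Ideal.mem_span_singleton.1 hf.1)).1 g _
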